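/- If G is a connected simple graph on at least 2 vertices, then the cube G^3 (the graph on the same vertex set where two vertices are adjacent iff their distance in G is at most 3) is Hamilton-connected: for every pair of distinct vertices v, w there is a Hamiltonian path in G^3 from v to w. -/

import Mathlib

def SimpleGraph.power {V : Type*} (G : SimpleGraph V) (n : ℕ) : SimpleGraph V where
  Adj v w := 1 ≤ G.dist v w ∧ G.dist v w ≤ n
  symm := ⟨fun v w (h : 1 ≤ G.dist v w ∧ G.dist v w ≤ n) =>
    (show 1 ≤ G.dist w v ∧ G.dist w v ≤ n by rwa [SimpleGraph.dist_comm])⟩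
  loopless := ⟨fun v h => by simp [SimpleGraph.dist_self] at h⟩

/-- A graph is Hamilton-connected if every pair of distinct vertices is joined
by a Hamiltonian path. -/
def SimpleGraph.IsHamiltonConnected {V : Type*} [DecidableEq V] (G : SimpleGraph V) : Prop :=
  ∀ v w : V, v ≠ w → ∃ p : G.Walk v w, p.IsHamiltonian

/-- A graph is `k`-ordered if every sequence of `k` distinct vertices lies on a cycle
in the given cyclic order. -/
def SimpleGraph.IsKOrdered {V : Type*} (G : SimpleGraph V) (k : ℕ) : Prop :=
  ∀ v : Fin k → V, Function.Injective v →
    ∃ (a : V) (c : G.Walk a a), c.IsCycle ∧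
      ∃ t : Fin k → ℕ, StrictMono t ∧ (∀ i, t i < c.length) ∧ ∀ i, c.getVert (t i) = v i

/-- A graph is `k`-ordered Hamiltonian if every sequence of `k` distinct vertices lies on a
Hamiltonian cycle in the given cyclic order. -/
def SimpleGraph.IsKOrderedHamiltonian {V : Type*} [DecidableEq V] (G : SimpleGraph V) (k : ℕ) :
    Prop :=
  ∀ v : Fin k → V, Function.Injective v →
    ∃ (a : V) (c : G.Walk a a), c.IsHamiltonianCycle ∧
      ∃ t : Fin k → ℕ, StrictMono t ∧ (∀ i, t i < c.length) ∧ ∀ i, c.getVert (t i) = v i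

namespace CubeHam

open SimpleGraph

universe u

variable {V : Type u}

/-- A walk whose support lies in `S` gives reachability in the induced graph. -/
lemma reachable_induce_of_walk {H : SimpleGraph V} {S : Set V} :
    ∀ {x y : V} (w : H.Walk x y), (∀ z ∈ w.support, z ∈ S) →
      ∀ (hx : x ∈ S) (hy : y ∈ S), (H.induce S).Reachable ⟨x, hx⟩ ⟨y, hy⟩ := by
  intro x y w
  induction w with
  | nil => intro _ hx hy; exact SimpleGraph.Reachable.refl _
  | @cons a b c h p ih =>
    intro hs hx hy
    have hb : b ∈ S := hs b (by simp [SimpleGraph.Walk.support_cons])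
    have hstep : (H.induce S).Adj ⟨a, hx⟩ ⟨b, hb⟩ := h
    refine (hstep.reachable).trans (ih ?_ hb hy)
    intro z hz
    exact hs z (by simp [SimpleGraph.Walk.support_cons, hz])

lemma induce_connected {H : SimpleGraph V} {S : Set V} {c : V} (hc : c ∈ S)
    (h : ∀ x, x ∈ S → ∃ w : H.Walk c x, ∀ z ∈ w.support, z ∈ S) :
    (H.induce S).Connected := by
  haveI : Nonempty ↥S := ⟨⟨c, hc⟩⟩
  refine ⟨fun x y => ?_⟩
  obtain ⟨wx, hwx⟩ := h x.1 x.2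
  obtain ⟨wy, hwy⟩ := h y.1 y.2
  exact (reachable_induce_of_walk wx hwx hc x.2).symm.trans
    (reachable_induce_of_walk wy hwy hc y.2)

lemma exists_adj_of_reachable_ne {W : Type*} {H : SimpleGraph W} {x y : W} (hxy : x ≠ y)
    (h : H.Reachable x y) : ∃ z, H.Adj x z := by
  obtain ⟨w⟩ := h
  cases w with
  | nil => exact absurd rfl hxy
  | cons h _ => exact ⟨_, h⟩

lemma isHamiltonian_reverse {W : Type*} [DecidableEq W] {H : SimpleGraph W} {x y : W}
    {p : H.Walk x y} (hp : p.IsHamiltonian) : p.reverse.IsHamiltonian := by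
  intro a
  rw [SimpleGraph.Walk.support_reverse, List.count_reverse]
  exact hp a

lemma power3_adj {G : SimpleGraph V} (hG : G.Connected) {a b : V} (hab : a ≠ b)
    (w : G.Walk a b) (hw : w.length ≤ 3) : (G.power 3).Adj a b :=
  show 1 ≤ G.dist a b ∧ G.dist a b ≤ 3 from
  ⟨hG.pos_dist_of_ne hab, le_trans (SimpleGraph.dist_le w) hw⟩

/-- The canonical homomorphism from the cube of an induced subgraph of `H ≤ G` into the
cube of `G` (for `G` connected). -/
def homPower3 {H G : SimpleGraph V} (hHG : H ≤ G) (hG : G.Connected) (S : Set V) :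
    (H.induce S).power 3 →g G.power 3 where
  toFun := Subtype.val
  map_rel' := by
    intro a b hab
    obtain ⟨h1, h3⟩ := (show 1 ≤ (H.induce S).dist a b ∧ (H.induce S).dist a b ≤ 3 from hab)
    have hne : a ≠ b := by rintro rfl; simp [SimpleGraph.dist_self] at h1
    obtain ⟨p, hp⟩ := SimpleGraph.exists_walk_of_dist_ne_zero
      (G := H.induce S) (u := a) (v := b) (by omega)
    have hvne : (a : V) ≠ (b : V) := fun h => hne (Subtype.val_injective h)
    refine power3_adj hG hvne
      ((p.map (SimpleGraph.Embedding.induce S).toHom).map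
        (SimpleGraph.Hom.ofLE hHG)) ?_
    erw [SimpleGraph.Walk.length_map, SimpleGraph.Walk.length_map, hp]
    exact h3

lemma key : ∀ n : ℕ, ∀ {V : Type u} [Fintype V] [DecidableEq V] (G : SimpleGraph V),
    Nat.card V ≤ n → G.Connected → ∀ u v : V, u ≠ v →
      ∃ p : (G.power 3).Walk u v, p.IsHamiltonian := by
  intro n
  induction n with
  | zero =>
    intro V _ _ G hn _ u v _
    haveI : Nonempty V := ⟨u⟩
    have : 0 < Nat.card V := Nat.card_pos (α := V)
    omega
  | succ n IH =>
    intro V _ _ G hn hG u v huv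
    classical
    -- a minimal connected spanning subgraph of G
    obtain ⟨T, ⟨hTG, hT⟩, hmin⟩ :=
      (wellFounded_lt (α := SimpleGraph V)).has_min
        {T' | T' ≤ G ∧ T'.Connected} ⟨G, le_rfl, hG⟩
    -- every edge of T is a bridge of T
    have hbridge : ∀ a b : V, T.Adj a b → ¬ (T.deleteEdges {s(a,b)}).Reachable a b := by
      intro a b hab hreach
      have hconn : (T.deleteEdges {s(a,b)}).Connected := by
        haveI := hT.nonempty
        refine ⟨fun x y => ?_⟩
        obtain ⟨w⟩ := hT.preconnected x y
        induction w with
        | nil => exact SimpleGraph.Reachable.refl _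
        | @cons p q r h w ih =>
          refine SimpleGraph.Reachable.trans ?_ ih
          by_cases he : s(p, q) = s(a, b)
          · rw [Sym2.eq_iff] at he
            rcases he with ⟨rfl, rfl⟩ | ⟨rfl, rfl⟩
            · exact hreach
            · exact hreach.symm
          · exact SimpleGraph.Adj.reachable
              (by rw [SimpleGraph.deleteEdges_adj]; exact ⟨h, by simpa using he⟩)
      have hlt : T.deleteEdges {s(a,b)} < T := by
        refine lt_of_le_of_ne (SimpleGraph.deleteEdges_le _) ?_
        intro hEq
        have hmem : s(a,b) ∈ (T.deleteEdges {s(a,b)}).edgeSet := by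
          rw [hEq]; exact hab
        rw [SimpleGraph.edgeSet_deleteEdges] at hmem
        simp at hmem
      exact hmin _ ⟨le_trans (SimpleGraph.deleteEdges_le _) hTG, hconn⟩ hlt
    -- a path from u to v in T and its first edge u–u'
    obtain ⟨p₀⟩ := hT.preconnected u v
    obtain ⟨pw, hp⟩ := p₀.toPath
    cases pw with
    | nil => exact absurd rfl huv
    | @cons _ u' _ hadj q =>
      rw [SimpleGraph.Walk.cons_isPath_iff] at hp
      have hGuu' : G.Adj u u' := hTG hadj
      set T' := T.deleteEdges {s(u, u')} with hT'def
      have hT'G : T' ≤ G := le_trans (SimpleGraph.deleteEdges_le _) hTG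
      have hqe : ∀ e ∈ q.edges, e ∉ ({s(u,u')} : Set (Sym2 V)) := by
        intro e he hmem
        rw [Set.mem_singleton_iff] at hmem
        subst hmem
        exact hp.2 (q.fst_mem_support_of_mem_edges he)
      have hq' : T'.Reachable u' v := ⟨q.toDeleteEdges _ hqe⟩
      set A : Set V := {x | T'.Reachable u x} with hAdef
      have huA : u ∈ A := SimpleGraph.Reachable.refl u
      have hbr : ¬ T'.Reachable u u' := hbridge u u' hadj
      have hBof : ∀ x, T'.Reachable u' x → x ∉ A := fun x hx hxA =>
        hbr (SimpleGraph.Reachable.trans hxA hx.symm)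
      have hvB : v ∉ A := hBof v hq'
      have hu'B : u' ∉ A := hBof u' (SimpleGraph.Reachable.refl u')
      have hreachB : ∀ x, x ∉ A → T'.Reachable u' x := by
        intro x hx
        obtain ⟨w₀⟩ := hT.preconnected u x
        obtain ⟨pw2, hp2⟩ := w₀.toPath
        by_cases he : s(u, u') ∈ pw2.edges
        · cases pw2 with
          | nil => exact absurd huA hx
          | @cons _ w₂ _ h₂ q₂ =>
            rw [SimpleGraph.Walk.edges_cons] at he
            rcases List.mem_cons.mp he with heq | het
            · have hw₂ : w₂ = u' := by
                rw [Sym2.eq_iff] at heq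
                rcases heq with ⟨-, h'⟩ | ⟨h1, h2⟩
                · exact h'.symm
                · exact absurd h2.symm hadj.ne
              have hnodup := hp2.isTrail.edges_nodup
              rw [SimpleGraph.Walk.edges_cons, List.nodup_cons] at hnodup
              have hni : s(u, u') ∉ q₂.edges := by rw [heq]; exact hnodup.1
              have hq₂ : ∀ e ∈ q₂.edges, e ∉ ({s(u,u')} : Set (Sym2 V)) := by
                intro e hee hmem
                rw [Set.mem_singleton_iff] at hmem
                subst hmem
                exact hni hee
              exact hw₂ ▸ ⟨q₂.toDeleteEdges _ hq₂⟩
            · have hmem := q₂.fst_mem_support_of_mem_edges het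
              rw [SimpleGraph.Walk.cons_isPath_iff] at hp2
              exact (hp2.2 hmem).elim
        · have hpe : ∀ e ∈ pw2.edges, e ∉ ({s(u,u')} : Set (Sym2 V)) := by
            intro e hee hmem
            rw [Set.mem_singleton_iff] at hmem
            exact he (hmem ▸ hee)
          exact (hx ⟨pw2.toDeleteEdges _ hpe⟩).elim
      -- connectivity of the two induced pieces
      have hAconn : (T'.induce A).Connected := by
        refine induce_connected huA ?_
        intro x hx
        refine ⟨Nonempty.some hx, ?_⟩
        intro z hz
        exact ⟨(Nonempty.some hx).takeUntil z hz⟩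
      have hBconn : (T'.induce Aᶜ).Connected := by
        refine induce_connected (hu'B : u' ∈ Aᶜ) ?_
        intro x hx
        refine ⟨Nonempty.some (hreachB x hx), ?_⟩
        intro z hz
        exact hBof z ⟨(Nonempty.some (hreachB x hx)).takeUntil z hz⟩
      -- cardinalities
      haveI : Fintype ↥A := Fintype.ofFinite _
      haveI : Fintype ↥(Aᶜ) := Fintype.ofFinite _
      have hcards : Nat.card ↥A + Nat.card ↥(Aᶜ) = Nat.card V := by
        rw [Nat.card_coe_set_eq, Nat.card_coe_set_eq]
        exact Set.ncard_add_ncard_compl A (Set.toFinite A) (Set.toFinite Aᶜ)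
      haveI : Nonempty ↥A := ⟨⟨u, huA⟩⟩
      haveI : Nonempty ↥(Aᶜ) := ⟨⟨u', hu'B⟩⟩
      have hApos : 0 < Nat.card ↥A := Nat.card_pos
      have hBpos : 0 < Nat.card ↥(Aᶜ) := Nat.card_pos
      have hAle : Nat.card ↥A ≤ n := by omega
      have hBle : Nat.card ↥(Aᶜ) ≤ n := by omega
      -- the homomorphisms to G^3
      let fA := homPower3 hT'G hG A
      let fB := homPower3 hT'G hG Aᶜ
      -- side A : a Hamiltonian path of the A-part from u to some a₀ close to u
      have sideA : ∃ (a₀ : V), a₀ ∈ A ∧ (a₀ = u ∨ G.Adj u a₀) ∧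
          ∃ PA' : (G.power 3).Walk u a₀,
            (∀ w ∈ A, PA'.support.count w = 1) ∧ (∀ w ∉ A, PA'.support.count w = 0) := by
        by_cases hA1 : ∀ z ∈ A, z = u
        · refine ⟨u, huA, Or.inl rfl, SimpleGraph.Walk.nil, ?_, ?_⟩
          · intro w hw
            have : w = u := hA1 w hw
            subst this
            simp
          · intro w hw
            have : w ≠ u := fun h => hw (h ▸ huA)
            simp [SimpleGraph.Walk.support_nil, List.count_eq_zero, this]
        · push_neg at hA1
          obtain ⟨z, hzA, hzu⟩ := hA1
          have hne : (⟨u, huA⟩ : ↥A) ≠ ⟨z, hzA⟩ := fun h => hzu (congrArg Subtype.val h).symm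
          obtain ⟨a, haAdj⟩ := exists_adj_of_reachable_ne hne
            (hAconn.preconnected ⟨u, huA⟩ ⟨z, hzA⟩)
          obtain ⟨PA, hPA⟩ := IH (T'.induce A) hAle hAconn ⟨u, huA⟩ a haAdj.ne
          refine ⟨a.1, a.2, Or.inr (hT'G haAdj), PA.map fA, ?_, ?_⟩
          · intro w hw
            have := List.count_map_of_injective PA.support (Subtype.val : ↥A → V)
              Subtype.val_injective ⟨w, hw⟩
            erw [SimpleGraph.Walk.support_map]
            exact this.trans (by convert hPA ⟨w, hw⟩ using 2; exact lawful_beq_subsingleton _ _)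
          · intro w hw
            erw [SimpleGraph.Walk.support_map, List.count_eq_zero]
            rintro hmem
            obtain ⟨⟨z', hz'⟩, -, rfl⟩ := List.mem_map.mp hmem
            exact hw hz'
      -- side B : a Hamiltonian path of the B-part from some b₀ close to u' to v
      have sideB : ∃ (b₀ : V), b₀ ∉ A ∧ (b₀ = u' ∨ G.Adj u' b₀) ∧
          ∃ PB' : (G.power 3).Walk b₀ v,
            (∀ w ∉ A, PB'.support.count w = 1) ∧ (∀ w ∈ A, PB'.support.count w = 0) := by
        by_cases hB1 : ∀ z ∈ Aᶜ, z = u'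
        · have hvu' : v = u' := hB1 v hvB
          refine ⟨v, hvB, Or.inl hvu', SimpleGraph.Walk.nil, ?_, ?_⟩
          · intro w hw
            have : w = u' := hB1 w hw
            rw [this, ← hvu']
            simp
          · intro w hw
            have : w ≠ v := fun h => hvB (h ▸ hw)
            simp [SimpleGraph.Walk.support_nil, List.count_eq_zero, this]
        · push_neg at hB1
          obtain ⟨z, hzB, hzu'⟩ := hB1
          have hmapcounts : ∀ (b₀ : ↥(Aᶜ)) (PB : ((T'.induce Aᶜ).power 3).Walk b₀ ⟨v, hvB⟩),
              PB.IsHamiltonian →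
              (∀ w ∉ A, (PB.map fB).support.count w = 1) ∧
              (∀ w ∈ A, (PB.map fB).support.count w = 0) := by
            intro b₀ PB hPB
            constructor
            · intro w hw
              have := List.count_map_of_injective PB.support (Subtype.val : ↥(Aᶜ) → V)
                Subtype.val_injective ⟨w, hw⟩
              rw [SimpleGraph.Walk.support_map]
              exact this.trans (by convert hPB ⟨w, hw⟩ using 2; exact lawful_beq_subsingleton _ _)
            · intro w hw
              rw [SimpleGraph.Walk.support_map, List.count_eq_zero]
              rintro hmem
              obtain ⟨⟨z', hz'⟩, -, rfl⟩ := List.mem_map.mp hmem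
              exact hz' hw
          by_cases hvu' : v = u'
          · -- pick a neighbour of v = u' in the B-part
            have hneB : (⟨u', hu'B⟩ : ↥(Aᶜ)) ≠ ⟨z, hzB⟩ :=
              fun h => hzu' (congrArg Subtype.val h).symm
            obtain ⟨b, hbAdj⟩ := exists_adj_of_reachable_ne hneB
              (hBconn.preconnected ⟨u', hu'B⟩ ⟨z, hzB⟩)
            have hvB' : (⟨v, hvB⟩ : ↥(Aᶜ)) = ⟨u', hu'B⟩ := Subtype.ext hvu'
            obtain ⟨PB, hPB⟩ := IH (T'.induce Aᶜ) hBle hBconn ⟨v, hvB⟩ b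
              (by rw [hvB']; exact hbAdj.ne)
            have hPBrev := isHamiltonian_reverse hPB
            obtain ⟨h1, h0⟩ := hmapcounts b PB.reverse hPBrev
            refine ⟨b.1, b.2, Or.inr (hT'G hbAdj), PB.reverse.map fB,
              h1, h0⟩
          · obtain ⟨PB, hPB⟩ := IH (T'.induce Aᶜ) hBle hBconn ⟨u', hu'B⟩ ⟨v, hvB⟩
              (fun h => hvu' (congrArg Subtype.val h).symm)
            obtain ⟨h1, h0⟩ := hmapcounts ⟨u', hu'B⟩ PB hPB
            exact ⟨u', hu'B, Or.inl rfl, PB.map fB, h1, h0⟩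
      obtain ⟨a₀, ha₀A, ha₀, PA', hcA1, hcA0⟩ := sideA
      obtain ⟨b₀, hb₀B, hb₀, PB', hcB1, hcB0⟩ := sideB
      -- joining edge in G^3
      have hjoin : (G.power 3).Adj a₀ b₀ := by
        have hne : a₀ ≠ b₀ := fun h => hb₀B (h ▸ ha₀A)
        obtain ⟨w1, hw1⟩ : ∃ w : G.Walk a₀ u, w.length ≤ 1 := by
          rcases ha₀ with rfl | h
          · exact ⟨SimpleGraph.Walk.nil, by simp⟩
          · exact ⟨SimpleGraph.Walk.cons h.symm SimpleGraph.Walk.nil, by simp⟩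
        obtain ⟨w2, hw2⟩ : ∃ w : G.Walk u' b₀, w.length ≤ 1 := by
          rcases hb₀ with rfl | h
          · exact ⟨SimpleGraph.Walk.nil, by simp⟩
          · exact ⟨SimpleGraph.Walk.cons h SimpleGraph.Walk.nil, by simp⟩
        refine power3_adj hG hne (w1.append (SimpleGraph.Walk.cons hGuu' w2)) ?_
        rw [SimpleGraph.Walk.length_append, SimpleGraph.Walk.length_cons]
        omega
      refine ⟨PA'.append (SimpleGraph.Walk.cons hjoin PB'), ?_⟩
      intro w
      rw [SimpleGraph.Walk.support_append, List.count_append]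
      have htail : (SimpleGraph.Walk.cons hjoin PB').support.tail = PB'.support := by
        rw [SimpleGraph.Walk.support_cons]
        rfl
      rw [htail]
      by_cases hw : w ∈ A
      · rw [hcA1 w hw, hcB0 w hw]
      · rw [hcA0 w hw, hcB1 w hw]

end CubeHam

theorem stmt_0 {V : Type*} [Fintype V] [DecidableEq V] (G : SimpleGraph V)
    (hG : G.Connected) (h2 : 2 ≤ Fintype.card V) :
    (G.power 3).IsHamiltonConnected := by
  intro v w hvw
  exact CubeHam.key (Nat.card V) G le_rfl hG v w hvw
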